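/- Let 0 < a < b, α > 0 and μ > 0 be real numbers. The determinant of the 4×4 real matrix whose rows are (a², a² ln a, 1, a⁴), (b², b² ln b, 1, b⁴), (b², b²(2 + ln b), 1, 9b⁴) and (−a²μ + αa³, a³α − a²μ ln a + a³α ln a, 3μ − aα, 3a⁵α + 3a⁴μ) vanishes if and only if μ = aα(1 + 3σ⁴ − 4σ² − 4σ⁴ ln σ)/(2(σ⁴ − 1 − 4σ⁴ ln σ)), where σ = b/a. -/

import Mathlib

/-!
Writing `b = aσ` and `ℓ = ln σ`, cofactor expansion gives
`det = 4 a⁸ σ² (2μ (σ⁴ − 1 − 4σ⁴ℓ) − aα (1 + 3σ⁴ − 4σ² − 4σ⁴ℓ))`,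
so the determinant vanishes exactly when `μ` is the stated quotient, provided the denominator
`σ⁴ − 1 − 4σ⁴ ln σ` does not vanish. For `σ > 1` it is negative: `ln σ ≥ 1 − 1/σ` bounds it by
`−3σ⁴ + 4σ³ − 1 = −(σ − 1)²(3σ² + 2σ + 1)`.
-/

open Real

theorem pow_four_sub_one_sub_mul_log_neg {σ : ℝ} (hσ : 1 < σ) :
    σ ^ 4 - 1 - 4 * σ ^ 4 * log σ < 0 := by
  have hσ₀ : 0 < σ := one_pos.trans hσ
  have hlog : 4 * σ ^ 4 * (1 - σ⁻¹) ≤ 4 * σ ^ 4 * log σ :=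
    mul_le_mul_of_nonneg_left (one_sub_inv_le_log_of_pos hσ₀) (by positivity)
  have hpoly : 4 * σ ^ 4 * (1 - σ⁻¹) = 4 * σ ^ 4 - 4 * σ ^ 3 := by
    field_simp
  have hfactor : 0 < (σ - 1) ^ 2 * (3 * σ ^ 2 + 2 * σ + 1) := by
    have : 0 < σ - 1 := sub_pos.mpr hσ
    positivity
  linarith

theorem Matrix.det_fin_four_of {R : Type*} [CommRing R]
    (a b c d e f g h i j k l m n o p : R) :
    Matrix.det !![a, b, c, d; e, f, g, h; i, j, k, l; m, n, o, p] =
      a * (f * (k * p - l * o) - g * (j * p - l * n) + h * (j * o - k * n))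
      - b * (e * (k * p - l * o) - g * (i * p - l * m) + h * (i * o - k * m))
      + c * (e * (j * p - l * n) - f * (i * p - l * m) + h * (i * n - j * m))
      - d * (e * (j * o - k * n) - f * (i * o - k * m) + g * (i * n - j * m)) := by
  simp [Matrix.det_succ_row_zero, Fin.sum_univ_succ, Fin.succAbove]
  ring

theorem det_boundaryConditions (a σ α μ L ℓ : ℝ) :
    Matrix.det
      !![a ^ 2, a ^ 2 * L, 1, a ^ 4;
         (a * σ) ^ 2, (a * σ) ^ 2 * (L + ℓ), 1, (a * σ) ^ 4;
         (a * σ) ^ 2, (a * σ) ^ 2 * (2 + (L + ℓ)), 1, 9 * (a * σ) ^ 4;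
         -(a ^ 2 * μ) + α * a ^ 3,
           a ^ 3 * α - a ^ 2 * μ * L + a ^ 3 * α * L,
           3 * μ - a * α,
           3 * a ^ 5 * α + 3 * a ^ 4 * μ] =
      4 * a ^ 8 * σ ^ 2 * (2 * μ * (σ ^ 4 - 1 - 4 * σ ^ 4 * ℓ) -
        a * α * (1 + 3 * σ ^ 4 - 4 * σ ^ 2 - 4 * σ ^ 4 * ℓ)) := by
  rw [Matrix.det_fin_four_of]
  ring

theorem mul_sub_eq_zero_iff_eq_div {K : Type*} [Field K] {c μ x N D : K} (hc : c ≠ 0)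
    (hD : D ≠ 0) (h2 : (2 : K) ≠ 0) :
    c * (2 * μ * D - x * N) = 0 ↔ μ = x * N / (2 * D) := by
  rw [mul_eq_zero, or_iff_right hc, sub_eq_zero, eq_div_iff (mul_ne_zero h2 hD)]
  constructor <;> intro h <;> linear_combination h

theorem det_vanishes_iff_critical_viscosity (a b α μ : ℝ)
    (ha : 0 < a) (hab : a < b) :
    Matrix.det
      !![a ^ 2, a ^ 2 * Real.log a, 1, a ^ 4;
         b ^ 2, b ^ 2 * Real.log b, 1, b ^ 4;
         b ^ 2, b ^ 2 * (2 + Real.log b), 1, 9 * b ^ 4;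
         -(a ^ 2 * μ) + α * a ^ 3,
           a ^ 3 * α - a ^ 2 * μ * Real.log a + a ^ 3 * α * Real.log a,
           3 * μ - a * α,
           3 * a ^ 5 * α + 3 * a ^ 4 * μ] = 0 ↔
    μ = a * α * (1 + 3 * (b / a) ^ 4 - 4 * (b / a) ^ 2 - 4 * (b / a) ^ 4 * Real.log (b / a)) /
        (2 * ((b / a) ^ 4 - 1 - 4 * (b / a) ^ 4 * Real.log (b / a))) := by
  obtain ⟨σ, hσ, rfl⟩ : ∃ σ, 1 < σ ∧ b = a * σ :=
    ⟨b / a, (one_lt_div ha).mpr hab, (mul_div_cancel₀ b ha.ne').symm⟩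
  have hσ₀ : σ ≠ 0 := (one_pos.trans hσ).ne'
  rw [mul_div_cancel_left₀ σ ha.ne', log_mul ha.ne' hσ₀, det_boundaryConditions]
  exact mul_sub_eq_zero_iff_eq_div (by positivity)
    (pow_four_sub_one_sub_mul_log_neg hσ).ne two_ne_zero
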